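/- arXiv:1306.5201 — 3 statements merged into one kernel-verified Lean document; each statement's English description precedes it below -/
import Mathlib

section
/- For y ∈ (-1, 1) and ε ∈ (0, 1-|y|), the remainder |2/√(1-(y/(1-ε))²) - 2/√(1-y²)| is bounded by C·ε·|y|/√(((1-ε)² - y²)³) for an absolute constant C (e.g. C = 2 works). -/
/-!
Writing `1 / √(1 - (y / a) ^ 2) = a / √(a ^ 2 - y ^ 2)`, the claim is a mean value bound for
`t ↦ t / √(t ^ 2 - y ^ 2)`, whose derivative is `-y ^ 2 / (t ^ 2 - y ^ 2) ^ (3 / 2)`. It is proved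
algebraically: with `p = √(a ^ 2 - y ^ 2) ≤ q = √(b ^ 2 - y ^ 2)`, rationalising gives
`a / p - b / q = y ^ 2 (b ^ 2 - a ^ 2) / (p q (a q + b p))`, and `(a + b) p ^ 2 ≤ q (a q + b p)`
turns this into `(b - a) y ^ 2 / p ^ 3`. Finally `y ^ 2 ≤ |y|` because `|y| < 1`.
-/

open Real

theorem Real.sqrt_one_sub_div_sq {a : ℝ} (ha : 0 < a) (y : ℝ) :
    √(1 - (y / a) ^ 2) = √(a ^ 2 - y ^ 2) / a := by
  rw [show 1 - (y / a) ^ 2 = (a ^ 2 - y ^ 2) / a ^ 2 by field_simp,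
    sqrt_div' _ (sq_nonneg a), sqrt_sq ha.le]

theorem Real.sqrt_pow {x : ℝ} (hx : 0 ≤ x) (n : ℕ) : √(x ^ n) = √x ^ n := by
  rw [sqrt_eq_iff_eq_sq (by positivity) (by positivity), ← pow_mul, mul_comm, pow_mul,
    sq_sqrt hx]

theorem div_sqrt_sq_sub_sq_sub_mem_Icc {y a b : ℝ} (hya : |y| < a) (hab : a ≤ b) :
    a / √(a ^ 2 - y ^ 2) - b / √(b ^ 2 - y ^ 2) ∈
      Set.Icc 0 ((b - a) * y ^ 2 / √((a ^ 2 - y ^ 2) ^ 3)) := by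
  have ha : 0 < a := (abs_nonneg y).trans_lt hya
  have hb : 0 < b := ha.trans_le hab
  have hba : 0 ≤ b - a := sub_nonneg.2 hab
  have hpa : 0 < a ^ 2 - y ^ 2 := by
    rw [← sq_abs y]; nlinarith [abs_nonneg y]
  have hpb : a ^ 2 - y ^ 2 ≤ b ^ 2 - y ^ 2 := by nlinarith
  rw [sqrt_pow hpa.le]
  set p := √(a ^ 2 - y ^ 2)
  set q := √(b ^ 2 - y ^ 2)
  have hp : 0 < p := sqrt_pos.2 hpa
  have hpq : p ≤ q := sqrt_le_sqrt hpb
  have hq : 0 < q := hp.trans_le hpq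
  have hp2 : p ^ 2 = a ^ 2 - y ^ 2 := sq_sqrt hpa.le
  have hq2 : q ^ 2 = b ^ 2 - y ^ 2 := sq_sqrt (hpa.le.trans hpb)
  have hsum : 0 < a * q + b * p := by positivity
  have hkey : (a * q - b * p) * (a * q + b * p) = y ^ 2 * (b - a) * (b + a) := by
    linear_combination a ^ 2 * hq2 - b ^ 2 * hp2
  have hnum : 0 ≤ a * q - b * p := by
    refine le_of_mul_le_mul_right ?_ hsum
    rw [zero_mul, hkey]
    positivity
  have hdiff : a / p - b / q = (a * q - b * p) / (p * q) := by field_simp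
  rw [hdiff]
  refine ⟨by positivity, ?_⟩
  rw [div_le_div_iff₀ (by positivity) (by positivity)]
  suffices h : (a * q - b * p) * p ^ 2 ≤ (b - a) * y ^ 2 * q by
    calc (a * q - b * p) * p ^ 3 = (a * q - b * p) * p ^ 2 * p := by ring
      _ ≤ (b - a) * y ^ 2 * q * p := by gcongr
      _ = (b - a) * y ^ 2 * (p * q) := by ring
  refine le_of_mul_le_mul_right ?_ hsum
  have hsq : (b + a) * p ^ 2 ≤ q * (a * q + b * p) := by nlinarith
  calc (a * q - b * p) * p ^ 2 * (a * q + b * p) = y ^ 2 * (b - a) * ((b + a) * p ^ 2) := by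
        rw [mul_right_comm, hkey]; ring
    _ ≤ y ^ 2 * (b - a) * (q * (a * q + b * p)) := by gcongr
    _ = (b - a) * y ^ 2 * q * (a * q + b * p) := by ring

theorem dumbbell_taylor_remainder_general (y ε : ℝ)
    (hε : 0 < ε) (hε1 : ε < 1 - |y|) :
    |2 / Real.sqrt (1 - (y / (1 - ε)) ^ 2) - 2 / Real.sqrt (1 - y ^ 2)|
      ≤ 2 * ε * |y| / Real.sqrt (((1 - ε) ^ 2 - y ^ 2) ^ 3) := by
  have hya : |y| < 1 - ε := by linarith
  obtain ⟨hnonneg, hle⟩ := div_sqrt_sq_sub_sq_sub_mem_Icc hya (by linarith : 1 - ε ≤ 1)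
  rw [sub_sub_cancel] at hle
  have hsplit : 2 / √(1 - (y / (1 - ε)) ^ 2) - 2 / √(1 - y ^ 2) =
      2 * ((1 - ε) / √((1 - ε) ^ 2 - y ^ 2) - 1 / √(1 ^ 2 - y ^ 2)) := by
    rw [sqrt_one_sub_div_sq ((abs_nonneg y).trans_lt hya), one_pow, div_div_eq_mul_div]
    ring
  have hyy : y ^ 2 ≤ |y| := by
    rw [← sq_abs, sq]
    exact mul_le_of_le_one_left (abs_nonneg y) (by linarith)
  rw [hsplit, abs_of_nonneg (by positivity)]
  calc 2 * ((1 - ε) / √((1 - ε) ^ 2 - y ^ 2) - 1 / √(1 ^ 2 - y ^ 2))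
      ≤ 2 * (ε * y ^ 2 / √(((1 - ε) ^ 2 - y ^ 2) ^ 3)) := by gcongr
    _ ≤ 2 * (ε * |y| / √(((1 - ε) ^ 2 - y ^ 2) ^ 3)) := by gcongr
    _ = 2 * ε * |y| / √(((1 - ε) ^ 2 - y ^ 2) ^ 3) := by ring

/-- Taylor remainder bound: comparing 2/√(1-(y/(1-ε))²) with 2/√(1-y²). -/
theorem dumbbell_taylor_remainder (y ε : ℝ) (hy : -1 < y) (hy1 : y < 1)
    (hε : 0 < ε) (hε1 : ε < 1 - |y|) :
    |2 / Real.sqrt (1 - (y / (1 - ε)) ^ 2) - 2 / Real.sqrt (1 - y ^ 2)|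
      ≤ 2 * ε * |y| / Real.sqrt (((1 - ε) ^ 2 - y ^ 2) ^ 3) :=
  dumbbell_taylor_remainder_general y ε hε hε1
end

section
/- Suppose energy conservation ε(1-ε)·φ̇₊² + ẏ₊² = ε(1-ε)·φ̇₋² + ẏ₋² holds with φ̇₊ = -φ̇₋ - (2/√(1-y²))·ẏ₋ + r where |r| ≤ C·ε/δ, and assume |φ̇₋| ≤ M, |ẏ₋| ≤ δ, 1 - y² ≥ c·δ, and ε = δ². Then |ẏ₊² - ẏ₋²| ≤ C'·δ^{5/2} for a constant C' depending only on C, M, c. -/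
/-!
Energy conservation turns the change of `ẏ²` into `ε(1-ε)(φ̇₋ + φ̇₊)(φ̇₋ - φ̇₊)`. The collision
law makes `φ̇₋ + φ̇₊ = r - 2ẏ₋/√(1-y²)` small: `|r| = O(δ)`, and since `|ẏ₋| ≤ δ` and
`1 - y² ≥ cδ` the second term is `O(√δ)`. The difference `φ̇₋ - φ̇₊` stays bounded, so
with `ε = δ²` the change is `O(δ² · √δ)`.
-/

open Real

lemma abs_sq_sub_sq_eq_of_energy_eq {κ p q v w : ℝ}
    (h : κ * q ^ 2 + w ^ 2 = κ * p ^ 2 + v ^ 2) :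
    |w ^ 2 - v ^ 2| = |κ| * (|p + q| * |p - q|) := by
  rw [← abs_mul, ← abs_mul]
  congr 1
  linear_combination h

lemma abs_add_le_and_abs_sub_le_of_eq_neg_sub_add {p q u r M a b : ℝ}
    (hq : q = -p - u + r) (hp : |p| ≤ M) (hu : |u| ≤ a) (hr : |r| ≤ b) :
    |p + q| ≤ a + b ∧ |p - q| ≤ 2 * M + a + b := by
  subst hq
  rw [abs_le] at hp hu hr
  constructor <;> rw [abs_le] <;> constructor <;> linarith

lemma abs_div_sqrt_le_sqrt_div_sqrt {c δ s v : ℝ} (hc : 0 < c) (hδ : 0 < δ) (hv : |v| ≤ δ)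
    (hs : c * δ ≤ s) : |v / √s| ≤ √δ / √c := by
  rw [← sqrt_div' _ hc.le]
  apply abs_le_sqrt
  have hs_pos : 0 < s := (mul_pos hc hδ).trans_le hs
  rw [div_pow, sq_sqrt hs_pos.le, div_le_div_iff₀ hs_pos hc]
  calc v ^ 2 * c ≤ δ ^ 2 * c :=
        mul_le_mul_of_nonneg_right (sq_le_sq.mpr (by rwa [abs_of_pos hδ])) hc.le
    _ = δ * (c * δ) := by ring
    _ ≤ δ * s := by gcongr

lemma rpow_five_halves {δ : ℝ} (hδ : 0 < δ) : δ ^ ((5 : ℝ) / 2) = δ ^ 2 * √δ := by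
  rw [sqrt_eq_rpow, show (5 : ℝ) / 2 = 2 + 1 / 2 by norm_num, rpow_add hδ, rpow_two]

/-- Energy bookkeeping estimate (7): the change in ẏ² over one light-mass bounce
    is O(δ^{5/2}). -/
theorem energy_bookkeeping (C M c : ℝ) (hC : 0 < C) (hM : 0 < M) (hc : 0 < c) :
    ∃ C' > 0, ∀ ε δ y ydm ydp pdm pdp r : ℝ,
      0 < δ → δ ≤ 1 → ε = δ ^ 2 → 0 < ε → ε < 1 →
      -1 < y → y < 1 → c * δ ≤ 1 - y ^ 2 →
      |pdm| ≤ M → |ydm| ≤ δ → |r| ≤ C * ε / δ →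
      pdp = -pdm - (2 / Real.sqrt (1 - y ^ 2)) * ydm + r →
      ε * (1 - ε) * pdp ^ 2 + ydp ^ 2 = ε * (1 - ε) * pdm ^ 2 + ydm ^ 2 →
      |ydp ^ 2 - ydm ^ 2| ≤ C' * δ ^ ((5 : ℝ) / 2) := by
  refine ⟨(C + 2 / √c) * (2 * M + 2 / √c + C), by positivity, ?_⟩
  intro ε δ y ydm ydp pdm pdp r hδ hδ1 hε _ hε1 _ _ hcy hpdm hydm hr hpdp hE
  have hu : |2 / √(1 - y ^ 2) * ydm| ≤ 2 / √c * √δ := by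
    rw [← mul_div_right_comm, mul_div_assoc, abs_mul, abs_two, div_mul_eq_mul_div, mul_div_assoc]
    gcongr
    exact abs_div_sqrt_le_sqrt_div_sqrt hc hδ hydm hcy
  have hr' : |r| ≤ C * δ := by
    rwa [hε, pow_two, mul_div_assoc, mul_div_cancel_right₀ _ hδ.ne'] at hr
  obtain ⟨hsum, hdiff⟩ := abs_add_le_and_abs_sub_le_of_eq_neg_sub_add hpdp hpdm hu hr'
  have hsqrtδ : √δ ≤ 1 := sqrt_le_one.mpr hδ1
  have hδ_le : δ ≤ √δ := le_sqrt_self_iff.mpr hδ1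
  have hκ : |ε * (1 - ε)| ≤ δ ^ 2 := by
    rw [abs_of_pos (by nlinarith), ← hε]
    nlinarith
  rw [abs_sq_sub_sq_eq_of_energy_eq hE, rpow_five_halves hδ]
  calc |ε * (1 - ε)| * (|pdm + pdp| * |pdm - pdp|)
      ≤ δ ^ 2 * ((2 / √c * √δ + C * √δ) * (2 * M + 2 / √c * 1 + C * 1)) := by
        gcongr
        · exact hsum.trans (by gcongr)
        · exact hdiff.trans (by gcongr)
    _ = (C + 2 / √c) * (2 * M + 2 / √c + C) * (δ ^ 2 * √δ) := by ring
end

section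
/- The collision map (ẏ₋, φ̇₋) ↦ (ẏ₊, φ̇₊) given by ẏ₊ = ẏ₋·(-1 + 2β2cos²φ/(β1+β2cos²φ)) - φ̇₋·(2β1β2cos φ/(β1+β2cos²φ)) and φ̇₊ = φ̇₋·(1 - 2β2cos²φ/(β1+β2cos²φ)) - ẏ₋·(2cos φ/(β1+β2cos²φ)) preserves the kinetic energy K = (1/2)ẏ² + (1/2)β1β2·φ̇². -/
/-!
The collision map is the reflection across the line orthogonal to `n = (β₁, cos φ)`, orthogonality
being taken for the kinetic energy `K(ẏ, φ̇) = ½ẏ² + ½β₁β₂φ̇²` itself: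
`v ↦ v - (polar K v n / K n) • n`. Such a reflection preserves any quadratic form, since
`K (v - t • n) = K v - t * polar K v n + t² * K n`.
-/

open QuadraticMap

theorem QuadraticMap.map_sub_smul {R M : Type*} [CommRing R] [AddCommGroup M] [Module R M]
    (Q : QuadraticForm R M) (v n : M) (t : R) :
    Q (v - t • n) = Q v - t * polar Q v n + t * t * Q n := by
  have h : polar Q v (-t • n) = Q (v + -t • n) - Q v - Q (-t • n) := rfl
  rw [polar_smul_right, Q.map_smul, smul_eq_mul, smul_eq_mul] at h
  rw [sub_eq_add_neg, ← neg_smul]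
  linear_combination -h

theorem QuadraticMap.map_sub_polar_div_smul {K V : Type*} [Field K] [AddCommGroup V] [Module K V]
    (Q : QuadraticForm K V) (v n : V) : Q (v - (polar Q v n / Q n) • n) = Q v := by
  rw [Q.map_sub_smul]
  rcases eq_or_ne (Q n) 0 with hn | hn
  · simp [hn]
  · field_simp
    ring

noncomputable def kineticEnergy (μ : ℝ) : QuadraticForm ℝ (ℝ × ℝ) :=
  (1 / 2 : ℝ) • QuadraticMap.sq.prod (μ • QuadraticMap.sq)

theorem kineticEnergy_apply (μ y p : ℝ) :
    kineticEnergy μ (y, p) = 1 / 2 * y ^ 2 + 1 / 2 * μ * p ^ 2 := by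
  simp [kineticEnergy]
  ring

theorem polar_kineticEnergy (μ y p y' p' : ℝ) :
    polar (kineticEnergy μ) (y, p) (y', p') = y * y' + μ * p * p' := by
  simp only [polar, Prod.mk_add_mk, kineticEnergy_apply]
  ring

noncomputable def collision (β₁ β₂ c : ℝ) (v : ℝ × ℝ) : ℝ × ℝ :=
  let D := β₁ + β₂ * c ^ 2
  (v.1 * (-1 + 2 * β₂ * c ^ 2 / D) - v.2 * (2 * β₁ * β₂ * c / D),
    v.2 * (1 - 2 * β₂ * c ^ 2 / D) - v.1 * (2 * c / D))

section

variable {β₁ β₂ c : ℝ}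

theorem collision_eq_reflection (hβ₁ : β₁ ≠ 0) (hD : β₁ + β₂ * c ^ 2 ≠ 0) (v : ℝ × ℝ) :
    collision β₁ β₂ c v = v - (polar (kineticEnergy (β₁ * β₂)) v (β₁, c) /
      kineticEnergy (β₁ * β₂) (β₁, c)) • (β₁, c) := by
  obtain ⟨y, p⟩ := v
  rw [polar_kineticEnergy, kineticEnergy_apply, collision]
  ext <;>
  · simp only [Prod.fst_sub, Prod.snd_sub, Prod.smul_fst, Prod.smul_snd, smul_eq_mul]
    field_simp
    ring

theorem kineticEnergy_collision (hβ₁ : β₁ ≠ 0) (hD : β₁ + β₂ * c ^ 2 ≠ 0) (v : ℝ × ℝ) :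
    kineticEnergy (β₁ * β₂) (collision β₁ β₂ c v) = kineticEnergy (β₁ * β₂) v := by
  rw [collision_eq_reflection hβ₁ hD]
  exact map_sub_polar_div_smul _ _ _

end

theorem collision_preserves_energy_general (β1 β2 φ ydm pdm : ℝ)
    (hβ1 : 0 < β1)
    (hden : 0 < β1 + β2 * Real.cos φ ^ 2) :
    let D := β1 + β2 * Real.cos φ ^ 2
    let ydp := ydm * (-1 + 2 * β2 * Real.cos φ ^ 2 / D)
                 - pdm * (2 * β1 * β2 * Real.cos φ / D)
    let pdp := pdm * (1 - 2 * β2 * Real.cos φ ^ 2 / D)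
                 - ydm * (2 * Real.cos φ / D)
    1 / 2 * ydp ^ 2 + 1 / 2 * (β1 * β2) * pdp ^ 2
      = 1 / 2 * ydm ^ 2 + 1 / 2 * (β1 * β2) * pdm ^ 2 := by
  have h := kineticEnergy_collision hβ1.ne' hden.ne' (ydm, pdm)
  rwa [collision, kineticEnergy_apply, kineticEnergy_apply] at h

/-- The dumbbell collision map preserves the kinetic energy
    K = (1/2)ẏ² + (1/2)β1β2 φ̇². -/
theorem collision_preserves_energy (β1 β2 φ ydm pdm : ℝ)
    (hβ1 : 0 < β1) (hβ2 : 0 < β2) (hsum : β1 + β2 = 1)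
    (hden : 0 < β1 + β2 * Real.cos φ ^ 2) :
    let D := β1 + β2 * Real.cos φ ^ 2
    let ydp := ydm * (-1 + 2 * β2 * Real.cos φ ^ 2 / D)
                 - pdm * (2 * β1 * β2 * Real.cos φ / D)
    let pdp := pdm * (1 - 2 * β2 * Real.cos φ ^ 2 / D)
                 - ydm * (2 * Real.cos φ / D)
    1 / 2 * ydp ^ 2 + 1 / 2 * (β1 * β2) * pdp ^ 2
      = 1 / 2 * ydm ^ 2 + 1 / 2 * (β1 * β2) * pdm ^ 2 :=
  collision_preserves_energy_general β1 β2 φ ydm pdm hβ1 hden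
end
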